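/- Let Ω ⊂ ℝⁿ be a bounded open convex set, F a Finsler norm with polar F°, p > 1, and suppose Ω is NOT a Wulff shape centered at the origin. Then the set S = {x ∈ ∂Ω : F°(x) < r^F_max(Ω)} has positive H^{n-1} measure, and the strict inequality M_F(Ω)/P_F(Ω) < (r^F_max(Ω))^p holds. -/

import Mathlib

open MeasureTheory

noncomputable def polar {E : Type*} [NormedAddCommGroup E] [InnerProductSpace ℝ E]
    (F : E → ℝ) (v : E) : ℝ :=
  ⨆ ξ : {ξ : E // ξ ≠ 0}, (inner ℝ (ξ : E) v : ℝ) / F (ξ : E)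

/-!
If `F°` were constant on `∂Ω`, hence equal to its maximum `r` there, then by homogeneity
`F° = r · gauge Ω`, and `Ω = {gauge Ω < 1} = {F° < r}` would be a Wulff shape. So some `x₀ ∈ ∂Ω`
has `F°(x₀) < r`, and by continuity so has the part of `∂Ω` near `x₀`. The exit point of the ray
`t ↦ h + t • x₀` depends continuously on `h`, so the orthogonal projection onto `x₀ᗮ` maps that
part of `∂Ω` onto a neighbourhood of `0` in `x₀ᗮ`; projections being `1`-Lipschitz, it has
positive `H^{n-1}` measure. Finally `(r^p - F°^p) F(ν) ≥ 0` on `∂Ω`, with strict inequality on a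
set of positive measure.
-/

open Set Filter Topology Module
open scoped Pointwise

section Polar

variable {E : Type*} [NormedAddCommGroup E] [InnerProductSpace ℝ E] {F : E → ℝ} {a : ℝ}

theorem polar_zero (F : E → ℝ) : polar F 0 = 0 := by
  simp [polar]

theorem polar_smul_of_nonneg {c : ℝ} (hc : 0 ≤ c) (F : E → ℝ) (v : E) :
    polar F (c • v) = c * polar F v := by
  simp only [polar, Real.mul_iSup_of_nonneg hc, real_inner_smul_right, mul_div_assoc]

theorem inner_div_le_norm_div (ha : 0 < a) (hlow : ∀ ξ, a * ‖ξ‖ ≤ F ξ) (v : E) {ξ : E}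
    (hξ : ξ ≠ 0) : inner ℝ ξ v / F ξ ≤ ‖v‖ / a := by
  have hFξ : 0 < F ξ := (mul_pos ha (norm_pos_iff.2 hξ)).trans_le (hlow ξ)
  rw [div_le_div_iff₀ hFξ ha]
  calc inner ℝ ξ v * a ≤ ‖ξ‖ * ‖v‖ * a := by gcongr; exact real_inner_le_norm ξ v
    _ = ‖v‖ * (a * ‖ξ‖) := by ring
    _ ≤ ‖v‖ * F ξ := by gcongr; exact hlow ξ

theorem inner_div_le_polar (ha : 0 < a) (hlow : ∀ ξ, a * ‖ξ‖ ≤ F ξ) (v : E) {ξ : E}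
    (hξ : ξ ≠ 0) : inner ℝ ξ v / F ξ ≤ polar F v :=
  le_ciSup (f := fun ξ : {ξ : E // ξ ≠ 0} ↦ inner ℝ (ξ : E) v / F ξ)
    ⟨‖v‖ / a, by rintro _ ⟨ξ, rfl⟩; exact inner_div_le_norm_div ha hlow v ξ.2⟩ ⟨ξ, hξ⟩

theorem polar_pos (ha : 0 < a) (hlow : ∀ ξ, a * ‖ξ‖ ≤ F ξ) {v : E} (hv : v ≠ 0) :
    0 < polar F v := by
  have hFv : 0 < F v := (mul_pos ha (norm_pos_iff.2 hv)).trans_le (hlow v)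
  refine lt_of_lt_of_le ?_ (inner_div_le_polar ha hlow v hv)
  rw [real_inner_self_eq_norm_sq]
  exact div_pos (pow_pos (norm_pos_iff.2 hv) 2) hFv

theorem polar_nonneg (ha : 0 < a) (hlow : ∀ ξ, a * ‖ξ‖ ≤ F ξ) (v : E) : 0 ≤ polar F v := by
  rcases eq_or_ne v 0 with rfl | hv
  · rw [polar_zero]
  · exact (polar_pos ha hlow hv).le

theorem polar_le_add_dist (ha : 0 < a) (hlow : ∀ ξ, a * ‖ξ‖ ≤ F ξ) (v w : E) :
    polar F v ≤ polar F w + a⁻¹ * dist v w := by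
  refine Real.iSup_le (fun ξ ↦ ?_) (by positivity [polar_nonneg ha hlow w])
  calc inner ℝ (ξ : E) v / F ξ = inner ℝ (ξ : E) w / F ξ + inner ℝ (ξ : E) (v - w) / F ξ := by
        rw [← add_div, ← inner_add_right, add_sub_cancel]
    _ ≤ polar F w + ‖v - w‖ / a :=
        add_le_add (inner_div_le_polar ha hlow w ξ.2) (inner_div_le_norm_div ha hlow _ ξ.2)
    _ = polar F w + a⁻¹ * dist v w := by rw [dist_eq_norm, inv_mul_eq_div]

theorem continuous_polar (ha : 0 < a) (hlow : ∀ ξ, a * ‖ξ‖ ≤ F ξ) : Continuous (polar F) :=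
  (LipschitzWith.of_le_add_mul' a⁻¹ (polar_le_add_dist ha hlow)).continuous

end Polar

theorem neg_vadd_mem_nhds_zero {G : Type*} [TopologicalSpace G] [AddGroup G]
    [IsTopologicalAddGroup G] {s : Set G} {z : G} (hs : IsOpen s) (hz : z ∈ s) :
    -z +ᵥ s ∈ 𝓝 (0 : G) :=
  (hs.vadd (-z)).mem_nhds ⟨z, hz, neg_add_cancel z⟩

section ExitPoint

-- `gauge (-z +ᵥ Ω) u` is the inverse of the time at which the ray `t ↦ z + t • u` leaves `Ω`.

variable {E : Type*} [NormedAddCommGroup E] [NormedSpace ℝ E] {Ω : Set E} {z u : E}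

theorem add_smul_mem_iff_mul_gauge_lt_one (hconv : Convex ℝ Ω) (hop : IsOpen Ω) (hz : z ∈ Ω)
    {t : ℝ} (ht : 0 ≤ t) : z + t • u ∈ Ω ↔ t * gauge (-z +ᵥ Ω) u < 1 := by
  rw [← smul_eq_mul, ← gauge_smul_of_nonneg ht,
    gauge_lt_one_iff_mem_interior (hconv.vadd _) (neg_vadd_mem_nhds_zero hop hz),
    (hop.vadd _).interior_eq, mem_neg_vadd_set_iff, vadd_eq_add]

theorem add_smul_mem_closure_iff_mul_gauge_le_one (hconv : Convex ℝ Ω) (hop : IsOpen Ω)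
    (hz : z ∈ Ω) {t : ℝ} (ht : 0 ≤ t) :
    z + t • u ∈ closure Ω ↔ t * gauge (-z +ᵥ Ω) u ≤ 1 := by
  rw [← smul_eq_mul, ← gauge_smul_of_nonneg ht,
    gauge_le_one_iff_mem_closure (hconv.vadd _) (neg_vadd_mem_nhds_zero hop hz),
    closure_vadd, mem_neg_vadd_set_iff, vadd_eq_add]

theorem add_inv_gauge_smul_mem_frontier (hconv : Convex ℝ Ω) (hop : IsOpen Ω) (hz : z ∈ Ω)
    (hu : gauge (-z +ᵥ Ω) u ≠ 0) : z + (gauge (-z +ᵥ Ω) u)⁻¹ • u ∈ frontier Ω := by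
  have ht : 0 ≤ (gauge (-z +ᵥ Ω) u)⁻¹ := inv_nonneg.2 (gauge_nonneg u)
  rw [hop.frontier_eq, Set.mem_sdiff, add_smul_mem_iff_mul_gauge_lt_one hconv hop hz ht,
    add_smul_mem_closure_iff_mul_gauge_le_one hconv hop hz ht, inv_mul_cancel₀ hu]
  exact ⟨le_rfl, lt_irrefl 1⟩

theorem continuousOn_gauge_neg_vadd (hconv : Convex ℝ Ω) (hop : IsOpen Ω) (u : E) :
    ContinuousOn (fun z : E ↦ gauge (-z +ᵥ Ω) u) Ω := by
  intro z₀ hz₀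
  refine (tendsto_order.2 ⟨fun c hc ↦ ?_, fun c hc ↦ ?_⟩).mono_left nhdsWithin_le_nhds
  · rcases lt_or_ge c 0 with hc0 | hc0
    · exact Eventually.of_forall fun z ↦ hc0.trans_le (gauge_nonneg u)
    obtain ⟨c', hcc', hc'⟩ := exists_between hc
    have hc'pos : 0 < c' := hc0.trans_lt hcc'
    have hout : z₀ + c'⁻¹ • u ∉ closure Ω := by
      rw [add_smul_mem_closure_iff_mul_gauge_le_one hconv hop hz₀ (inv_nonneg.2 hc'pos.le),
        not_le, ← div_eq_inv_mul, one_lt_div hc'pos]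
      exact hc'
    have hcont : Continuous fun z : E ↦ z + c'⁻¹ • u := continuous_add_const _
    filter_upwards [hop.mem_nhds hz₀,
      hcont.continuousAt.preimage_mem_nhds (isClosed_closure.isOpen_compl.mem_nhds hout)]
      with z hz hzout
    rw [mem_preimage, mem_compl_iff,
      add_smul_mem_closure_iff_mul_gauge_le_one hconv hop hz (inv_nonneg.2 hc'pos.le), not_le,
      ← div_eq_inv_mul, one_lt_div hc'pos] at hzout
    exact hcc'.trans hzout
  · obtain ⟨c', hc', hcc'⟩ := exists_between hc
    have hc'pos : 0 < c' := (gauge_nonneg u).trans_lt hc'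
    have hin : z₀ + c'⁻¹ • u ∈ Ω := by
      rw [add_smul_mem_iff_mul_gauge_lt_one hconv hop hz₀ (inv_nonneg.2 hc'pos.le),
        ← div_eq_inv_mul, div_lt_one hc'pos]
      exact hc'
    have hcont : Continuous fun z : E ↦ z + c'⁻¹ • u := continuous_add_const _
    filter_upwards [hop.mem_nhds hz₀, hcont.continuousAt.preimage_mem_nhds (hop.mem_nhds hin)]
      with z hz hzin
    rw [mem_preimage, add_smul_mem_iff_mul_gauge_lt_one hconv hop hz (inv_nonneg.2 hc'pos.le),
      ← div_eq_inv_mul, div_lt_one hc'pos] at hzin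
    exact hzin.trans hcc'

end ExitPoint

section WulffShape

variable {E : Type*} [NormedAddCommGroup E] [InnerProductSpace ℝ E] {Ω : Set E} {F : E → ℝ}
  {a r : ℝ}

theorem gauge_pos_of_isBounded (hop : IsOpen Ω) (hbd : Bornology.IsBounded Ω) (h0 : (0 : E) ∈ Ω)
    {x : E} (hx : x ≠ 0) : 0 < gauge Ω x :=
  (gauge_pos (absorbent_nhds_zero (hop.mem_nhds h0)) ((NormedSpace.isVonNBounded_iff ℝ).2 hbd)).2 hx

theorem inv_gauge_smul_mem_frontier (hconv : Convex ℝ Ω) (hop : IsOpen Ω) (h0 : (0 : E) ∈ Ω)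
    {x : E} (hx : gauge Ω x ≠ 0) : (gauge Ω x)⁻¹ • x ∈ frontier Ω := by
  rw [← gauge_eq_one_iff_mem_frontier hconv (hop.mem_nhds h0),
    gauge_smul_of_nonneg (inv_nonneg.2 (gauge_nonneg x)), smul_eq_mul, inv_mul_cancel₀ hx]

theorem polar_eq_mul_gauge (hconv : Convex ℝ Ω) (hop : IsOpen Ω) (hbd : Bornology.IsBounded Ω)
    (h0 : (0 : E) ∈ Ω)
    (hr : ∀ x ∈ frontier Ω, polar F x = r) (x : E) : polar F x = r * gauge Ω x := by
  rcases eq_or_ne x 0 with rfl | hx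
  · rw [polar_zero, gauge_zero, mul_zero]
  have hg := gauge_pos_of_isBounded hop hbd h0 hx
  have h := hr _ (inv_gauge_smul_mem_frontier hconv hop h0 hg.ne')
  rw [polar_smul_of_nonneg (inv_nonneg.2 hg.le)] at h
  rw [← h, mul_comm, ← mul_assoc, mul_inv_cancel₀ hg.ne', one_mul]

theorem eq_setOf_polar_lt_of_polar_eq_on_frontier (hconv : Convex ℝ Ω) (hop : IsOpen Ω)
    (hbd : Bornology.IsBounded Ω) (h0 : (0 : E) ∈ Ω)
    (hr : ∀ x ∈ frontier Ω, polar F x = r) (hrpos : 0 < r) : Ω = {ξ | polar F ξ < r} := by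
  simp_rw [polar_eq_mul_gauge hconv hop hbd h0 hr, mul_lt_iff_lt_one_right hrpos]
  exact (setOfPred_gauge_lt_one_eq_self_of_isOpen hconv h0 hop).symm

theorem polar_le_sSup_image_closure [ProperSpace E] (ha : 0 < a) (hlow : ∀ ξ, a * ‖ξ‖ ≤ F ξ)
    (hbd : Bornology.IsBounded Ω) {x : E} (hx : x ∈ closure Ω) :
    polar F x ≤ sSup (polar F '' closure Ω) :=
  le_csSup (hbd.isCompact_closure.image (continuous_polar ha hlow)).bddAbove ⟨x, hx, rfl⟩

theorem exists_mem_frontier_polar_lt_sSup [ProperSpace E] [Nontrivial E] (ha : 0 < a)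
    (hlow : ∀ ξ, a * ‖ξ‖ ≤ F ξ) (hconv : Convex ℝ Ω) (hop : IsOpen Ω)
    (hbd : Bornology.IsBounded Ω) (h0 : (0 : E) ∈ Ω)
    (hnotW : ¬ ∃ r : ℝ, 0 < r ∧ Ω = {ξ | polar F ξ < r}) :
    ∃ x ∈ frontier Ω, polar F x < sSup (polar F '' closure Ω) := by
  by_contra! h
  have hR : ∀ x ∈ frontier Ω, polar F x = sSup (polar F '' closure Ω) := fun x hx ↦
    (polar_le_sSup_image_closure ha hlow hbd hx.1).antisymm (h x hx)
  obtain ⟨e, he⟩ := exists_ne (0 : E)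
  have hg := (gauge_pos_of_isBounded hop hbd h0 he).ne'
  have hRpos := polar_pos ha hlow (smul_ne_zero (inv_ne_zero hg) he)
  rw [hR _ (inv_gauge_smul_mem_frontier hconv hop h0 hg)] at hRpos
  exact hnotW ⟨_, hRpos, eq_setOf_polar_lt_of_polar_eq_on_frontier hconv hop hbd h0 hR hRpos⟩

end WulffShape

theorem hausdorffMeasure_pos_of_lipschitzWith_image_mem_nhds {X Y : Type*} [EMetricSpace X]
    [MeasurableSpace X] [BorelSpace X] [NormedAddCommGroup Y] [NormedSpace ℝ Y]
    [FiniteDimensional ℝ Y] [MeasurableSpace Y] [BorelSpace Y] {f : X → Y} {K : NNReal}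
    (hf : LipschitzWith K f) {s : Set X} {y : Y} (hs : f '' s ∈ 𝓝 y) :
    0 < μH[finrank ℝ Y] s := by
  have himage := hf.hausdorffMeasure_image_le (Nat.cast_nonneg (finrank ℝ Y)) s
  refine pos_iff_ne_zero.2 fun hzero ↦ ?_
  rw [hzero, mul_zero] at himage
  exact (Measure.measure_pos_of_mem_nhds _ hs).ne' (le_antisymm himage bot_le)

theorem hausdorffMeasure_frontier_inter_pos {E : Type*} [NormedAddCommGroup E]
    [InnerProductSpace ℝ E] [FiniteDimensional ℝ E] [MeasurableSpace E] [BorelSpace E]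
    {Ω V : Set E} {x₀ : E} (hconv : Convex ℝ Ω) (hop : IsOpen Ω) (h0 : (0 : E) ∈ Ω)
    (hx₀ : x₀ ∈ frontier Ω) (hV : V ∈ 𝓝 x₀) :
    0 < μH[(finrank ℝ E : ℝ) - 1] (frontier Ω ∩ V) := by
  have hx₀ne : x₀ ≠ 0 := fun h ↦ (hop.frontier_eq ▸ hx₀).2 (h ▸ h0)
  have : Nontrivial E := nontrivial_of_ne x₀ 0 hx₀ne
  have : Fact (finrank ℝ E = finrank ℝ E - 1 + 1) := ⟨(Nat.sub_add_cancel finrank_pos).symm⟩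
  set K := (ℝ ∙ x₀)ᗮ
  have hdim : (finrank ℝ E : ℝ) - 1 = finrank ℝ K := by
    rw [Submodule.finrank_orthogonal_span_singleton (n := finrank ℝ E - 1) hx₀ne,
      Nat.cast_sub finrank_pos, Nat.cast_one]
  rw [hdim]
  refine hausdorffMeasure_pos_of_lipschitzWith_image_mem_nhds
    K.orthogonalProjectionOnto.lipschitz (y := 0) ?_
  have hcoe : Tendsto ((↑) : K → E) (𝓝 0) (𝓝 0) := continuous_subtype_val.tendsto' 0 0 rfl
  have hg : Tendsto (fun h : K ↦ gauge (-(h : E) +ᵥ Ω) x₀) (𝓝 0) (𝓝 1) := by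
    have h1 : gauge (-(0 : E) +ᵥ Ω) x₀ = 1 := by
      rw [neg_zero, zero_vadd, gauge_eq_one_iff_mem_frontier hconv (hop.mem_nhds h0)]
      exact hx₀
    exact h1 ▸ ((continuousOn_gauge_neg_vadd hconv hop x₀).continuousAt
      (hop.mem_nhds h0)).tendsto.comp hcoe
  have hexit :
      Tendsto (fun h : K ↦ (h : E) + (gauge (-(h : E) +ᵥ Ω) x₀)⁻¹ • x₀) (𝓝 0) (𝓝 x₀) := by
    simpa using hcoe.add ((hg.inv₀ one_ne_zero).smul_const x₀)
  filter_upwards [hcoe (hop.mem_nhds h0), hg.eventually_ne one_ne_zero, hexit hV]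
    with h hhΩ hg_ne hhV
  refine ⟨_, ⟨add_inv_gauge_smul_mem_frontier hconv hop hhΩ hg_ne, hhV⟩, ?_⟩
  rw [map_add, map_smul, Submodule.orthogonalProjectionOnto_mem_subspace_eq_self,
    Submodule.orthogonalProjectionOnto_orthogonalComplement_singleton_eq_zero, smul_zero, add_zero]

theorem integral_mul_div_integral_lt {X : Type*} [MeasurableSpace X] {μ : Measure X}
    {f g : X → ℝ} {c : ℝ} (hc : 0 < c) (hf : AEStronglyMeasurable f μ) (hf0 : ∀ᵐ x ∂μ, 0 ≤ f x)
    (hfc : ∀ᵐ x ∂μ, f x ≤ c) (hg0 : ∀ᵐ x ∂μ, 0 ≤ g x)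
    (hpos : 0 < μ {x | f x < c ∧ 0 < g x}) :
    (∫ x, f x * g x ∂μ) / (∫ x, g x ∂μ) < c := by
  by_cases hg : Integrable g μ
  swap
  · rwa [integral_undef hg, div_zero]
  have hfg : Integrable (fun x ↦ f x * g x) μ := by
    refine hg.bdd_mul hf (c := c) ?_
    filter_upwards [hf0, hfc] with x hfx hfcx
    rwa [Real.norm_of_nonneg hfx]
  have hg_pos : 0 < ∫ x, g x ∂μ :=
    (integral_pos_iff_support_of_nonneg_ae hg0 hg).2
      (hpos.trans_le (measure_mono fun x hx ↦ hx.2.ne'))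
  have hgap : 0 < ∫ x, (c * g x - f x * g x) ∂μ := by
    refine (integral_pos_iff_support_of_nonneg_ae ?_ ((hg.const_mul c).sub hfg)).2
      (hpos.trans_le (measure_mono fun x hx ↦ ?_))
    · filter_upwards [hfc, hg0] with x hfx hgx
      exact sub_nonneg.2 (mul_le_mul_of_nonneg_right hfx hgx)
    · exact (sub_pos.2 (mul_lt_mul_of_pos_right hx.1 hx.2)).ne'
  rw [integral_sub (hg.const_mul c) hfg, integral_const_mul] at hgap
  rw [div_lt_iff₀ hg_pos]
  linarith

theorem strict_inequality_if_not_wulff_general (n : ℕ) (hn : 2 ≤ n)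
    (Ω : Set (EuclideanSpace ℝ (Fin n)))
    (hbd : Bornology.IsBounded Ω) (hop : IsOpen Ω) (hconvΩ : Convex ℝ Ω)
    (h0 : (0 : EuclideanSpace ℝ (Fin n)) ∈ Ω)
    (ν : EuclideanSpace ℝ (Fin n) → EuclideanSpace ℝ (Fin n))
    (hνunit : ∀ x ∈ frontier Ω, ‖ν x‖ = 1)
    (F : EuclideanSpace ℝ (Fin n) → ℝ) (a : ℝ) (ha : 0 < a)
    (hlow : ∀ ξ, a * ‖ξ‖ ≤ F ξ)
    (p : ℝ) (hp : 1 < p)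
    (hnotW : ¬ ∃ r : ℝ, 0 < r ∧ Ω = {ξ : EuclideanSpace ℝ (Fin n) | polar F ξ < r}) :
    0 < μH[(n : ℝ) - 1] {x ∈ frontier Ω | polar F x < sSup (polar F '' closure Ω)} ∧
    (∫ x in frontier Ω, (polar F x) ^ p * F (ν x) ∂(μH[(n : ℝ) - 1])) /
      (∫ x in frontier Ω, F (ν x) ∂(μH[(n : ℝ) - 1])) <
      (sSup (polar F '' closure Ω)) ^ p := by
  have : Nontrivial (EuclideanSpace ℝ (Fin n)) :=
    Module.nontrivial_of_finrank_pos (R := ℝ) (by rw [finrank_euclideanSpace_fin]; omega)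
  obtain ⟨x₀, hx₀, hx₀r⟩ := exists_mem_frontier_polar_lt_sSup ha hlow hconvΩ hop hbd h0 hnotW
  set r := sSup (polar F '' closure Ω)
  have hpolar := continuous_polar ha hlow
  have hS : 0 < μH[(n : ℝ) - 1] {x ∈ frontier Ω | polar F x < r} := by
    have h := hausdorffMeasure_frontier_inter_pos hconvΩ hop h0 hx₀
      ((isOpen_lt hpolar continuous_const).mem_nhds hx₀r)
    rwa [finrank_euclideanSpace_fin] at h
  have hF_pos : ∀ x ∈ frontier Ω, 0 < F (ν x) := fun x hx ↦
    ha.trans_le (by simpa [hνunit x hx] using hlow (ν x))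
  have hgap : {x ∈ frontier Ω | polar F x < r} ⊆
      {x | polar F x ^ p < r ^ p ∧ 0 < F (ν x)} ∩ frontier Ω := fun x hx ↦
    ⟨⟨Real.rpow_lt_rpow (polar_nonneg ha hlow x) hx.2 (by linarith), hF_pos x hx.1⟩, hx.1⟩
  refine ⟨hS, integral_mul_div_integral_lt
    (Real.rpow_pos_of_pos ((polar_nonneg ha hlow x₀).trans_lt hx₀r) p)
    (hpolar.rpow_const fun _ ↦ Or.inr (by linarith)).aestronglyMeasurable
    (ae_of_all _ fun x ↦ Real.rpow_nonneg (polar_nonneg ha hlow x) p)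
    ((ae_restrict_iff' isClosed_frontier.measurableSet).2 (ae_of_all _ fun x hx ↦
      Real.rpow_le_rpow (polar_nonneg ha hlow x)
        (polar_le_sSup_image_closure ha hlow hbd hx.1) (by linarith)))
    (ae_of_all _ fun x ↦ (mul_nonneg ha.le (norm_nonneg _)).trans (hlow (ν x)))
    (hS.trans_le ((measure_mono hgap).trans (Measure.le_restrict_apply _ _)))⟩

theorem strict_inequality_if_not_wulff (n : ℕ) (hn : 2 ≤ n)
    (Ω : Set (EuclideanSpace ℝ (Fin n)))
    (hbd : Bornology.IsBounded Ω) (hop : IsOpen Ω) (hconvΩ : Convex ℝ Ω)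
    (h0 : (0 : EuclideanSpace ℝ (Fin n)) ∈ Ω)
    (ν : EuclideanSpace ℝ (Fin n) → EuclideanSpace ℝ (Fin n))
    (hνmeas : Measurable ν)
    (hνunit : ∀ x ∈ frontier Ω, ‖ν x‖ = 1)
    (F : EuclideanSpace ℝ (Fin n) → ℝ) (a : ℝ) (ha : 0 < a)
    (hF0 : ∀ ξ, 0 ≤ F ξ)
    (hconv : ConvexOn ℝ Set.univ F)
    (hhom : ∀ (t : ℝ) (ξ : EuclideanSpace ℝ (Fin n)), F (t • ξ) = |t| * F ξ)
    (hlow : ∀ ξ, a * ‖ξ‖ ≤ F ξ)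
    (p : ℝ) (hp : 1 < p)
    (hnotW : ¬ ∃ r : ℝ, 0 < r ∧ Ω = {ξ : EuclideanSpace ℝ (Fin n) | polar F ξ < r}) :
    0 < μH[(n : ℝ) - 1] {x ∈ frontier Ω | polar F x < sSup (polar F '' closure Ω)} ∧
    (∫ x in frontier Ω, (polar F x) ^ p * F (ν x) ∂(μH[(n : ℝ) - 1])) /
      (∫ x in frontier Ω, F (ν x) ∂(μH[(n : ℝ) - 1])) <
      (sSup (polar F '' closure Ω)) ^ p :=
  strict_inequality_if_not_wulff_general n hn Ω hbd hop hconvΩ h0 ν hνunit F a ha hlow p hp hnotW
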